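/- Let c : ℝⁿ → ℝ^m be continuously differentiable, let C = {x ∈ ℝⁿ : cᵢ(x) ≥ 0 for all i}, let f : ℝⁿ → ℝⁿ be continuous, and let E ⊆ ℝⁿ be a linear subspace with orthogonal projection P : ℝⁿ → ℝⁿ onto E. Assume that at every point x ∈ C the gradients {∇cᵢ(x) : i with cᵢ(x) = 0} are linearly independent (LICQ). Let x : [0, T] → ℝⁿ be continuous, differentiable on (0, T), with x(0) ∈ C. Then the following are equivalent: (i) for every t ∈ (0, T), x(t) ∈ C and x'(t) is the unique minimizer of w ↦ ‖w − f(x(t))‖² over {w ∈ T_C(x(t)) : w − f(x(t)) ∈ E}, where T_C(x(t)) is the Bouligand tangent cone of C at x(t); (ii) for every t ∈ (0, T) there exists λ(t) ∈ ℝ^m such that x'(t) = f(x(t)) + Σᵢ λᵢ(t) P(∇cᵢ(x(t))), λᵢ(t) ≥ 0 for all i, cᵢ(x(t)) ≥ 0 for all i, and λᵢ(t) · cᵢ(x(t)) = 0 for all i. -/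

import Mathlib

/-!
Under LICQ the Bouligand cone of `C` at a feasible point equals the linearized cone
`L = {d | ⟪∇cᵢ, d⟫ ≥ 0 for all active i}`: one inclusion is the first-order condition for the
minimum of each active `cᵢ` on `C`; for the other, a vector `z` with `⟪∇cᵢ, z⟫ = 1` for all active
`i` makes every `d + ε z`, `d ∈ L`, a feasible direction. The ePDS velocity `ẋ` is then the
projection of `f(x)` onto `{w ∈ L | w - f(x) ∈ E}`. Testing its minimality against `ẋ + θ d`,
`d ∈ E ∩ L`, gives `⟪ẋ - f(x), d⟫ ≥ 0`, and Farkas' lemma applied to the projected active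
gradients `P ∇cᵢ` produces the multipliers. Conversely, the multipliers yield the variational
inequality `⟪ẋ - f(x), w - ẋ⟫ ≥ 0` on that set once `⟪∇cᵢ(x), ẋ⟫ = 0` for active `i`, which holds
because `t ↦ cᵢ(x t)` attains its minimum `0` there.
-/

open Filter Topology RealInnerProductSpace

noncomputable section

/-- The Bouligand tangent cone of a set `S` at a point `p`: the set of directions `d`
such that there are sequences `x k ∈ S`, `x k → p`, and positive reals `t k → 0`
with `(x k - p) / t k → d`. -/
def bouligandTangentCone {H : Type*} [NormedAddCommGroup H] [InnerProductSpace ℝ H]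
    (S : Set H) (p : H) : Set H :=
  {d | ∃ (x : ℕ → H) (t : ℕ → ℝ), (∀ k, x k ∈ S) ∧ (∀ k, 0 < t k) ∧
    Tendsto x atTop (𝓝 p) ∧ Tendsto t atTop (𝓝 0) ∧
    Tendsto (fun k => (t k)⁻¹ • (x k - p)) atTop (𝓝 d)}

/-- The polar cone of a set `K`: all vectors making a non-positive inner product with
every element of `K`. -/
def polarCone {H : Type*} [NormedAddCommGroup H] [InnerProductSpace ℝ H]
    (K : Set H) : Set H :=
  {v | ∀ d ∈ K, ⟪v, d⟫ ≤ 0}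

/-- `a` is the unique minimizer of `f` over `S`. -/
def IsUniqueMinOn {H : Type*} (f : H → ℝ) (S : Set H) (a : H) : Prop :=
  a ∈ S ∧ (∀ b ∈ S, f a ≤ f b) ∧ ∀ b ∈ S, (∀ u ∈ S, f b ≤ f u) → b = a

section TangentCone

variable {H : Type*} [NormedAddCommGroup H] [InnerProductSpace ℝ H] {S : Set H} {p d : H}

theorem bouligandTangentCone_subset_posTangentConeAt :
    bouligandTangentCone S p ⊆ posTangentConeAt S p := by
  rintro d ⟨x, t, hxS, ht, hx, -, hd⟩
  refine mem_tangentConeAt_of_seq atTop (fun k => ⟨(t k)⁻¹, (inv_pos.2 (ht k)).le⟩)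
    (fun k => x k - p) ?_ (.of_forall fun k => by simpa using hxS k) hd
  simpa using hx.sub_const p

theorem mem_bouligandTangentCone_of_tendsto {t : ℕ → ℝ} {v : ℕ → H} (ht : ∀ k, 0 < t k)
    (ht0 : Tendsto t atTop (𝓝 0)) (hv : Tendsto v atTop (𝓝 d)) (hS : ∀ k, p + t k • v k ∈ S) :
    d ∈ bouligandTangentCone S p := by
  refine ⟨fun k => p + t k • v k, t, hS, ht, ?_, ht0, ?_⟩
  · simpa using tendsto_const_nhds.add (ht0.smul hv)
  · refine hv.congr fun k => ?_
    rw [add_sub_cancel_left, smul_smul, inv_mul_cancel₀ (ht k).ne', one_smul]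

theorem mem_bouligandTangentCone_of_forall_eventually {v : ℕ → H} (hv : Tendsto v atTop (𝓝 d))
    (hS : ∀ k, ∀ᶠ τ in 𝓝[>] (0 : ℝ), p + τ • v k ∈ S) : d ∈ bouligandTangentCone S p := by
  have hτ (k : ℕ) : ∃ τ ∈ Set.Ioo (0 : ℝ) (1 / (k + 1)), p + τ • v k ∈ S :=
    (Filter.Eventually.and (Ioo_mem_nhdsGT (by positivity)) (hS k)).exists
  choose τ hτ hτS using hτ
  exact mem_bouligandTangentCone_of_tendsto (fun k => (hτ k).1)
    (squeeze_zero (fun k => (hτ k).1.le) (fun k => (hτ k).2.le)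
      tendsto_one_div_add_atTop_nhds_zero_nat) hv hτS

end TangentCone

section Constraints

variable {H : Type*} [NormedAddCommGroup H] [InnerProductSpace ℝ H] [CompleteSpace H]
  {ι : Type*} {c : ι → H → ℝ} {p : H}

def linearizedCone (c : ι → H → ℝ) (p : H) : Set H :=
  {d | ∀ i, c i p = 0 → 0 ≤ ⟪gradient (c i) p, d⟫}

theorem bouligandTangentCone_subset_linearizedCone (hc : ∀ i, DifferentiableAt ℝ (c i) p) :
    bouligandTangentCone {y | ∀ i, 0 ≤ c i y} p ⊆ linearizedCone c p := by
  intro d hd i hi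
  have hmin : IsLocalMinOn (c i) {y | ∀ i, 0 ≤ c i y} p :=
    (isMinOn_iff.2 fun y hy => hi ▸ hy i).localize
  rw [inner_gradient_left]
  exact hmin.hasFDerivWithinAt_nonneg (hc i).hasFDerivAt.hasFDerivWithinAt
    (bouligandTangentCone_subset_posTangentConeAt hd)

theorem eventually_nonneg_add_smul {φ : H → ℝ} {v : H} (hφ : DifferentiableAt ℝ φ p)
    (hp : 0 ≤ φ p) (hv : φ p = 0 → 0 < ⟪gradient φ p, v⟫) :
    ∀ᶠ τ in 𝓝[>] (0 : ℝ), 0 ≤ φ (p + τ • v) := by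
  have hline : HasDerivAt (fun τ : ℝ => φ (p + τ • v)) ⟪gradient φ p, v⟫ 0 := by
    rw [inner_gradient_left]
    refine hφ.hasFDerivAt.comp_hasDerivAt_of_eq 0 ?_ (by simp)
    simpa using ((hasDerivAt_id (0 : ℝ)).smul_const v).const_add p
  rcases hp.eq_or_lt with hp0 | hp0
  · have hslope := ((hasDerivAt_iff_tendsto_slope.1 hline).mono_left
      (nhdsGT_le_nhdsNE 0)).eventually (eventually_gt_nhds (hv hp0.symm))
    filter_upwards [hslope, self_mem_nhdsWithin] with τ hτ hτ0
    rw [slope_def_field, zero_smul, add_zero, ← hp0, sub_zero, sub_zero] at hτ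
    exact ((div_pos_iff_of_pos_right hτ0).1 hτ).le
  · filter_upwards [hline.continuousAt.eventually (eventually_gt_nhds (by simpa using hp0))
      |>.filter_mono nhdsWithin_le_nhds] with τ hτ
    exact hτ.le

theorem linearizedCone_subset_bouligandTangentCone [Finite ι]
    (hc : ∀ i, DifferentiableAt ℝ (c i) p) (hp : ∀ i, 0 ≤ c i p) {z : H}
    (hz : ∀ i, c i p = 0 → 0 < ⟪gradient (c i) p, z⟫) :
    linearizedCone c p ⊆ bouligandTangentCone {y | ∀ i, 0 ≤ c i y} p := by
  intro d hd
  refine mem_bouligandTangentCone_of_forall_eventually (v := fun k : ℕ => d + (1 / (k + 1) : ℝ) • z)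
    ?_ fun k => eventually_all.2 fun i => eventually_nonneg_add_smul (hc i) (hp i) fun hi => ?_
  · simpa using tendsto_const_nhds.add
      ((tendsto_one_div_add_atTop_nhds_zero_nat (𝕜 := ℝ)).smul_const z)
  · rw [inner_add_right, real_inner_smul_right]
    exact add_pos_of_nonneg_of_pos (hd i hi) (mul_pos (by positivity) (hz i hi))

theorem LinearIndependent.exists_inner_eq_one [FiniteDimensional ℝ H] {κ : Type*} {g : κ → H}
    (hg : LinearIndependent ℝ g) : ∃ z : H, ∀ i, ⟪g i, z⟫ = 1 := by
  obtain ⟨φ, hφ⟩ := Module.exists_dual_forall_apply_eq_one hg.linearIndepOn_univ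
  refine ⟨(InnerProductSpace.toDual ℝ H).symm (LinearMap.toContinuousLinearMap φ), fun i => ?_⟩
  rw [real_inner_comm, InnerProductSpace.toDual_symm_apply]
  exact hφ i trivial

theorem bouligandTangentCone_eq_linearizedCone [FiniteDimensional ℝ H] [Finite ι]
    (hc : ∀ i, DifferentiableAt ℝ (c i) p) (hp : ∀ i, 0 ≤ c i p)
    (hlicq : LinearIndependent ℝ fun i : {i // c i p = 0} => gradient (c i) p) :
    bouligandTangentCone {y | ∀ i, 0 ≤ c i y} p = linearizedCone c p := by
  obtain ⟨z, hz⟩ := hlicq.exists_inner_eq_one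
  exact (bouligandTangentCone_subset_linearizedCone hc).antisymm
    (linearizedCone_subset_bouligandTangentCone hc hp fun i hi => by rw [hz ⟨i, hi⟩]; exact one_pos)

end Constraints

section Farkas

variable {H : Type*} [NormedAddCommGroup H] [InnerProductSpace ℝ H]

theorem inner_sub_div_smul_eq_inner_sub_div_smul (u a d d₀ : H) :
    ⟪u - (⟪u, d₀⟫ / ⟪a, d₀⟫) • a, d⟫ = ⟪u, d - (⟪a, d⟫ / ⟪a, d₀⟫) • d₀⟫ := by
  simp only [inner_sub_left, inner_sub_right, real_inner_smul_left, real_inner_smul_right]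
  ring

/-- Farkas' lemma, by Fourier–Motzkin elimination of one generator at a time. -/
theorem exists_nonneg_sum_eq_of_forall_inner_nonneg {ι : Type*} [DecidableEq ι] (s : Finset ι)
    (b : ι → H) (g : H) (hg : ∀ d, (∀ i ∈ s, 0 ≤ ⟪b i, d⟫) → 0 ≤ ⟪g, d⟫) :
    ∃ l : ι → ℝ, (∀ i, 0 ≤ l i) ∧ (∀ i ∉ s, l i = 0) ∧ g = ∑ i ∈ s, l i • b i := by
  induction s using Finset.induction_on generalizing b g with
  | empty =>
    have : ⟪g, g⟫ ≤ 0 := by simpa [inner_neg_right] using hg (-g) (by simp)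
    exact ⟨0, fun _ => le_rfl, fun _ _ => rfl, by simpa using real_inner_self_nonpos.1 this⟩
  | insert a s ha ih =>
    by_cases hs : ∀ d, (∀ i ∈ s, 0 ≤ ⟪b i, d⟫) → 0 ≤ ⟪g, d⟫
    · obtain ⟨l, hl, hls, rfl⟩ := ih b g hs
      refine ⟨l, hl, fun i hi => hls i fun h => hi (Finset.mem_insert_of_mem h), ?_⟩
      rw [Finset.sum_insert ha, hls a ha, zero_smul, zero_add]
    push Not at hs
    obtain ⟨d₀, hd₀, hgd₀⟩ := hs
    have had₀ : ⟪b a, d₀⟫ < 0 := by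
      by_contra! h
      exact hgd₀.not_ge (hg d₀ (Finset.forall_mem_insert _ _ _ |>.2 ⟨h, hd₀⟩))
    -- Eliminate the direction `b a`: project every vector along `b a` onto the hyperplane `d₀ᗮ`.
    set r : H → ℝ := fun u => ⟪u, d₀⟫ / ⟪b a, d₀⟫ with hr
    obtain ⟨l, hl, hls, hlg⟩ := ih (fun i => b i - r (b i) • b a) (g - r g • b a) fun d hd => by
      have hkey := inner_sub_div_smul_eq_inner_sub_div_smul (a := b a) (d := d) (d₀ := d₀)
      simp only [hr, hkey] at hd ⊢
      refine hg _ (Finset.forall_mem_insert _ _ _ |>.2 ⟨?_, hd⟩)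
      rw [inner_sub_right, real_inner_smul_right, div_mul_cancel₀ _ had₀.ne, sub_self]
    refine ⟨Function.update l a (r g - ∑ i ∈ s, l i * r (b i)), fun i => ?_, fun i hi => ?_, ?_⟩
    · rcases eq_or_ne i a with rfl | hi
      · have hsum : ∑ i ∈ s, l i * r (b i) ≤ 0 := Finset.sum_nonpos fun i hi =>
          mul_nonpos_of_nonneg_of_nonpos (hl i) (div_nonpos_of_nonneg_of_nonpos (hd₀ i hi) had₀.le)
        have hrg : 0 < r g := div_pos_of_neg_of_neg hgd₀ had₀
        simp only [Function.update_self]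
        linarith
      · simpa [hi] using hl i
    · rw [Function.update_of_ne (by rintro rfl; exact hi (Finset.mem_insert_self _ s))]
      exact hls i fun h => hi (Finset.mem_insert_of_mem h)
    · have hsum : ∑ i ∈ s, Function.update l a (r g - ∑ i ∈ s, l i * r (b i)) i • b i =
          ∑ i ∈ s, l i • b i := Finset.sum_congr rfl fun i hi => by
        rw [Function.update_of_ne (ne_of_mem_of_not_mem hi ha)]
      rw [Finset.sum_insert ha, Function.update_self, hsum]
      refine (eq_add_of_sub_eq hlg).trans ?_
      simp only [smul_sub, smul_smul, Finset.sum_sub_distrib, ← Finset.sum_smul, sub_smul]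
      abel

end Farkas

section Projection

variable {H : Type*} [NormedAddCommGroup H] [InnerProductSpace ℝ H]

theorem isUniqueMinOn_norm_sub_sq_of_inner_nonneg {K : Set H} {v a : H} (ha : a ∈ K)
    (h : ∀ w ∈ K, 0 ≤ ⟪a - v, w - a⟫) : IsUniqueMinOn (fun w => ‖w - v‖ ^ 2) K a := by
  have hpyth (w : H) (hw : w ∈ K) : ‖a - v‖ ^ 2 + ‖w - a‖ ^ 2 ≤ ‖w - v‖ ^ 2 := by
    rw [show w - v = (a - v) + (w - a) by abel, norm_add_sq_real]
    linarith [h w hw]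
  refine ⟨ha, fun w hw => by nlinarith [hpyth w hw], fun w hw hmin => ?_⟩
  have : ‖w - a‖ ^ 2 ≤ 0 := by linarith [hpyth w hw, hmin a ha]
  simpa [sub_eq_zero] using this

theorem inner_nonneg_of_forall_norm_sub_sq_le {v a d : H}
    (h : ∀ θ : ℝ, 0 < θ → ‖a - v‖ ^ 2 ≤ ‖a + θ • d - v‖ ^ 2) : 0 ≤ ⟪a - v, d⟫ := by
  have hθ (θ : ℝ) (hθ : 0 < θ) : 0 ≤ 2 * ⟪a - v, d⟫ + θ * ‖d‖ ^ 2 := by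
    have := h θ hθ
    rw [show a + θ • d - v = (a - v) + θ • d by abel, norm_add_sq_real, norm_smul,
      real_inner_smul_right, mul_pow, Real.norm_eq_abs, sq_abs] at this
    nlinarith
  have hlim : Tendsto (fun θ : ℝ => 2 * ⟪a - v, d⟫ + θ * ‖d‖ ^ 2) (𝓝[>] 0)
      (𝓝 (2 * ⟪a - v, d⟫ + 0 * ‖d‖ ^ 2)) :=
    (Continuous.tendsto (by fun_prop) _).mono_left nhdsWithin_le_nhds
  linarith [ge_of_tendsto hlim (eventually_nhdsWithin_of_forall hθ)]

variable (E : Submodule ℝ H) [E.HasOrthogonalProjection]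

theorem exists_nonneg_sum_starProjection_eq {ι : Type*} [DecidableEq ι] (s : Finset ι)
    (b : ι → H) {g : H} (hgE : g ∈ E) (hg : ∀ d ∈ E, (∀ i ∈ s, 0 ≤ ⟪b i, d⟫) → 0 ≤ ⟪g, d⟫) :
    ∃ l : ι → ℝ, (∀ i, 0 ≤ l i) ∧ (∀ i ∉ s, l i = 0) ∧
      g = ∑ i ∈ s, l i • E.starProjection (b i) := by
  refine exists_nonneg_sum_eq_of_forall_inner_nonneg s _ g fun d hd => ?_
  rw [← E.starProjection_eq_self_iff.2 hgE, E.inner_starProjection_left_eq_right]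
  refine hg _ (E.starProjection_apply_mem d) fun i hi => ?_
  rw [← E.inner_starProjection_left_eq_right]
  exact hd i hi

end Projection

section ConstrainedProjection

variable {H : Type*} [NormedAddCommGroup H] [InnerProductSpace ℝ H] [CompleteSpace H]
  (E : Submodule ℝ H) [E.HasOrthogonalProjection] {ι : Type*} [Fintype ι] {c : ι → H → ℝ}
  {p v a : H}

theorem exists_multipliers_of_isMinOn (ha : a ∈ linearizedCone c p) (haE : a - v ∈ E)
    (hmin : IsMinOn (fun w => ‖w - v‖ ^ 2) {w | w ∈ linearizedCone c p ∧ w - v ∈ E} a) :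
    ∃ lam : ι → ℝ, a = v + ∑ i, lam i • E.starProjection (gradient (c i) p) ∧
      (∀ i, 0 ≤ lam i) ∧ ∀ i, lam i * c i p = 0 := by
  classical
  have hvi (d : H) (hdE : d ∈ E) (hd : d ∈ linearizedCone c p) : 0 ≤ ⟪a - v, d⟫ := by
    refine inner_nonneg_of_forall_norm_sub_sq_le fun θ hθ =>
      isMinOn_iff.1 hmin _ ⟨fun i hi => ?_, ?_⟩
    · rw [inner_add_right, real_inner_smul_right]
      exact add_nonneg (ha i hi) (mul_nonneg hθ.le (hd i hi))
    · rw [add_sub_right_comm]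
      exact E.add_mem haE (E.smul_mem θ hdE)
  obtain ⟨l, hl, hls, hlg⟩ := exists_nonneg_sum_starProjection_eq E {i | c i p = 0}
    (fun i => gradient (c i) p) haE fun d hdE hd => hvi d hdE fun i hi => hd i (by simpa using hi)
  refine ⟨l, ?_, hl, fun i => ?_⟩
  · rw [← sub_eq_iff_eq_add', hlg]
    exact Finset.sum_subset (Finset.subset_univ _) fun i _ hi => by rw [hls i hi, zero_smul]
  · by_cases hi : c i p = 0
    · rw [hi, mul_zero]
    · rw [hls i (by simpa using hi), zero_mul]

theorem isUniqueMinOn_of_multipliers {lam : ι → ℝ}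
    (heq : a = v + ∑ i, lam i • E.starProjection (gradient (c i) p)) (hlam : ∀ i, 0 ≤ lam i)
    (hcompl : ∀ i, lam i * c i p = 0) (hdir : ∀ i, c i p = 0 → ⟪gradient (c i) p, a⟫ = 0) :
    IsUniqueMinOn (fun w => ‖w - v‖ ^ 2) {w | w ∈ linearizedCone c p ∧ w - v ∈ E} a := by
  have hav : a - v = ∑ i, lam i • E.starProjection (gradient (c i) p) := by
    rw [heq, add_sub_cancel_left]
  have haE : a - v ∈ E := hav ▸ E.sum_mem fun i _ => E.smul_mem _ (E.starProjection_apply_mem _)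
  refine isUniqueMinOn_norm_sub_sq_of_inner_nonneg ⟨fun i hi => (hdir i hi).ge, haE⟩ ?_
  rintro w ⟨hwL, hwE⟩
  have hwa : w - a ∈ E := by simpa using E.sub_mem hwE haE
  rw [hav, sum_inner]
  refine Finset.sum_nonneg fun i _ => ?_
  rw [real_inner_smul_left, E.inner_starProjection_left_eq_right,
    E.starProjection_eq_self_iff.2 hwa]
  rcases (hlam i).eq_or_lt with h0 | hpos
  · rw [← h0, zero_mul]
  · have hi : c i p = 0 := (mul_eq_zero.1 (hcompl i)).resolve_left hpos.ne'
    rw [inner_sub_right, hdir i hi, sub_zero]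
    exact mul_nonneg hpos.le (hwL i hi)

end ConstrainedProjection

theorem IsLocalMin.inner_gradient_eq_zero {H : Type*} [NormedAddCommGroup H]
    [InnerProductSpace ℝ H] [CompleteSpace H] {φ : H → ℝ} {γ : ℝ → H} {v : H} {t : ℝ}
    (hmin : IsLocalMin (φ ∘ γ) t) (hφ : DifferentiableAt ℝ φ (γ t)) (hγ : HasDerivAt γ v t) :
    ⟪gradient φ (γ t), v⟫ = 0 := by
  rw [inner_gradient_left]
  exact hmin.hasDerivAt_eq_zero (hφ.hasFDerivAt.comp_hasDerivAt t hγ)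

theorem ePDS_iff_DCS_general (n m : ℕ)
    (c : Fin m → EuclideanSpace ℝ (Fin n) → ℝ)
    (hc : ∀ i, ContDiff ℝ 1 (c i))
    (C : Set (EuclideanSpace ℝ (Fin n)))
    (hC : C = {x | ∀ i, 0 ≤ c i x})
    (f : EuclideanSpace ℝ (Fin n) → EuclideanSpace ℝ (Fin n))
    (E : Submodule ℝ (EuclideanSpace ℝ (Fin n)))
    (P : EuclideanSpace ℝ (Fin n) → EuclideanSpace ℝ (Fin n))
    (hP : ∀ u, P u = (E.orthogonalProjection u : EuclideanSpace ℝ (Fin n)))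
    (licq : ∀ x ∈ C, LinearIndependent ℝ
      (fun i : {i : Fin m // c i x = 0} => gradient (c i.1) x))
    (T : ℝ)
    (x x' : ℝ → EuclideanSpace ℝ (Fin n))
    (hxderiv : ∀ t ∈ Set.Ioo 0 T, HasDerivAt x (x' t) t) :
    (∀ t ∈ Set.Ioo 0 T, x t ∈ C ∧
      IsUniqueMinOn (fun w => ‖w - f (x t)‖ ^ 2)
        {w | w ∈ bouligandTangentCone C (x t) ∧ w - f (x t) ∈ E} (x' t)) ↔
    (∀ t ∈ Set.Ioo 0 T, ∃ lam : Fin m → ℝ,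
      x' t = f (x t) + ∑ i, lam i • P (gradient (c i) (x t)) ∧
      (∀ i, 0 ≤ lam i) ∧
      (∀ i, 0 ≤ c i (x t)) ∧
      (∀ i, lam i * c i (x t) = 0)) := by
  obtain rfl : P = E.starProjection := funext hP
  subst hC
  have hdiff (i : Fin m) (y) : DifferentiableAt ℝ (c i) y :=
    (hc i).differentiable one_ne_zero |>.differentiableAt
  have htangent (t : ℝ) (hxt : ∀ i, 0 ≤ c i (x t)) :=
    bouligandTangentCone_eq_linearizedCone (hdiff · (x t)) hxt (licq (x t) hxt)
  constructor
  · intro h t ht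
    obtain ⟨hxt, ⟨hx'T, hx'E⟩, hmin, -⟩ := h t ht
    rw [htangent t hxt] at hx'T hmin
    obtain ⟨lam, heq, hlam, hcompl⟩ := exists_multipliers_of_isMinOn E hx'T hx'E (isMinOn_iff.2 hmin)
    exact ⟨lam, heq, hlam, hxt, hcompl⟩
  · intro h t ht
    obtain ⟨lam, heq, hlam, hxt, hcompl⟩ := h t ht
    have hfeas : ∀ᶠ s in 𝓝 t, ∀ i, 0 ≤ c i (x s) := by
      filter_upwards [Ioo_mem_nhds ht.1 ht.2] with s hs
      obtain ⟨-, -, -, hxs, -⟩ := h s hs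
      exact hxs
    have hdir (i : Fin m) (hi : c i (x t) = 0) : ⟪gradient (c i) (x t), x' t⟫ = 0 :=
      IsLocalMin.inner_gradient_eq_zero (hfeas.mono fun s hs => by simpa [hi] using hs i) (hdiff i _)
        (hxderiv t ht)
    rw [htangent t hxt]
    exact ⟨hxt, isUniqueMinOn_of_multipliers E heq hlam hcompl hdir⟩

/-- Under LICQ, a trajectory solves the extended projected dynamical system
`ẋ = P_{T_C(x),E}(f(x))` if and only if it solves the dynamic complementarity system
`ẋ = f(x) + Σ λᵢ P(∇cᵢ(x))`, `0 ≤ λ ⊥ c(x) ≥ 0`. -/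
theorem ePDS_iff_DCS (n m : ℕ)
    (c : Fin m → EuclideanSpace ℝ (Fin n) → ℝ)
    (hc : ∀ i, ContDiff ℝ 1 (c i))
    (C : Set (EuclideanSpace ℝ (Fin n)))
    (hC : C = {x | ∀ i, 0 ≤ c i x})
    (f : EuclideanSpace ℝ (Fin n) → EuclideanSpace ℝ (Fin n))
    (hf : Continuous f)
    (E : Submodule ℝ (EuclideanSpace ℝ (Fin n)))
    (P : EuclideanSpace ℝ (Fin n) → EuclideanSpace ℝ (Fin n))
    (hP : ∀ u, P u = (E.orthogonalProjection u : EuclideanSpace ℝ (Fin n)))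
    (licq : ∀ x ∈ C, LinearIndependent ℝ
      (fun i : {i : Fin m // c i x = 0} => gradient (c i.1) x))
    (T : ℝ)
    (x x' : ℝ → EuclideanSpace ℝ (Fin n))
    (hxcont : ContinuousOn x (Set.Icc 0 T))
    (hxderiv : ∀ t ∈ Set.Ioo 0 T, HasDerivAt x (x' t) t)
    (hx0 : x 0 ∈ C) :
    (∀ t ∈ Set.Ioo 0 T, x t ∈ C ∧
      IsUniqueMinOn (fun w => ‖w - f (x t)‖ ^ 2)
        {w | w ∈ bouligandTangentCone C (x t) ∧ w - f (x t) ∈ E} (x' t)) ↔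
    (∀ t ∈ Set.Ioo 0 T, ∃ lam : Fin m → ℝ,
      x' t = f (x t) + ∑ i, lam i • P (gradient (c i) (x t)) ∧
      (∀ i, 0 ≤ lam i) ∧
      (∀ i, 0 ≤ c i (x t)) ∧
      (∀ i, lam i * c i (x t) = 0)) :=
  ePDS_iff_DCS_general n m c hc C hC f E P hP licq T x x' hxderiv
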